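/- Let {A_i}_{i∈I} and {B_j}_{j∈J} be two admissible coverings of ℝ^d \ {0} by d-balls A_i = B_d(ξ_i, δ_1 h̃(ξ_i)), B_j = B_d(ζ_j, δ_1 h̃(ζ_j)) with the same d-moderate radius function h̃ and with the pairwise-disjointness property at a smaller radius δ'. Then sup_{i∈I} #{j ∈ J : A_i ∩ B_j ≠ ∅} < ∞ and sup_{j∈J} #{i ∈ I : B_j ∩ A_i ≠ ∅} < ∞. -/

import Mathlib

noncomputable section

abbrev Ed (d : ℕ) := EuclideanSpace ℝ (Fin d)

def Da {d : ℕ} (a : Fin d → ℝ) (s : ℝ) (ξ : Ed d) : Ed d := WithLp.toLp 2 (fun i => s ^ (a i) * ξ i)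

def IsAnisoNorm {d : ℕ} (a : Fin d → ℝ) (anorm : Ed d → ℝ) : Prop :=
  anorm 0 = 0 ∧ ∀ ξ : Ed d, ξ ≠ 0 →
    ∀ t : ℝ, (0 < t ∧ ‖Da a (1 / t) ξ‖ = 1) ↔ anorm ξ = t

def IsModerate {d : ℕ} (anorm : Ed d → ℝ) (h : Ed d → ℝ) (δ₀ R : ℝ) : Prop :=
  ∀ ξ ζ : Ed d, ξ ≠ 0 → ζ ≠ 0 → anorm (ξ - ζ) ≤ δ₀ * h ξ →
    R⁻¹ ≤ h ξ / h ζ ∧ h ξ / h ζ ≤ R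

/-!
If `A_i` meets `B_j`, the two open balls share a point `η ≠ 0`, and moderateness at `η` gives
`R⁻² h̃(ξ_i) ≤ h̃(ζ_j) ≤ R² h̃(ξ_i)`. Hence for all such `j` the balls `B_d(ζ_j, ρ)` with
`ρ = δ' h̃(ξ_i) / R²` lie inside the pairwise disjoint `δ'`-balls around the `ζ_j` and, by the
quasi-triangle inequality, inside one ball `B_d(ξ_i, C h̃(ξ_i))` with `C h̃(ξ_i) = (C R² / δ') ρ`.
As `|B_d(ξ, r)| = r ^ ν |B(0, 1)|` with `ν = ∑ aᵢ`, comparing volumes bounds their number by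
`(C R² / δ') ^ ν`, independently of `i`.
-/

open MeasureTheory Set
open scoped ENNReal

section

variable {d : ℕ} {a : Fin d → ℝ}

section Dilation

def daLinear (a : Fin d → ℝ) (s : ℝ) : Ed d →ₗ[ℝ] Ed d where
  toFun := Da a s
  map_add' x y := by ext i; simp [Da, mul_add]
  map_smul' c x := by ext i; simp only [Da, PiLp.smul_apply, smul_eq_mul, RingHom.id_apply]; ring

@[simp] lemma daLinear_apply (s : ℝ) (ξ : Ed d) : daLinear a s ξ = Da a s ξ := rfl

lemma Da_zero (s : ℝ) : Da a s 0 = 0 := map_zero (daLinear a s)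

lemma Da_add (s : ℝ) (x y : Ed d) : Da a s (x + y) = Da a s x + Da a s y :=
  map_add (daLinear a s) x y

lemma Da_neg (s : ℝ) (ξ : Ed d) : Da a s (-ξ) = -Da a s ξ := map_neg (daLinear a s) ξ

lemma Da_Da {s t : ℝ} (hs : 0 ≤ s) (ht : 0 ≤ t) (ξ : Ed d) :
    Da a s (Da a t ξ) = Da a (s * t) ξ := by
  ext i
  simp only [Da, PiLp.toLp_apply, Real.mul_rpow hs ht]
  ring

lemma det_daLinear {s : ℝ} (hs : 0 < s) : LinearMap.det (daLinear a s) = s ^ ∑ i, a i := by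
  rw [← LinearMap.det_toMatrix (EuclideanSpace.basisFun (Fin d) ℝ).toBasis,
    Real.rpow_sum_of_pos hs]
  convert Matrix.det_diagonal (d := fun i => s ^ a i)
  ext i j
  simp [LinearMap.toMatrix_apply, Da, Matrix.diagonal_apply, eq_comm]

lemma norm_Da_sq (s : ℝ) (ξ : Ed d) : ‖Da a s ξ‖ ^ 2 = ∑ i, (s ^ a i) ^ 2 * ξ i ^ 2 := by
  simp [EuclideanSpace.real_norm_sq_eq, Da, mul_pow]

lemma norm_Da_le {s c : ℝ} (hs : 0 ≤ s) (hc : 0 ≤ c) (hsc : ∀ i, s ^ a i ≤ c) (ξ : Ed d) :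
    ‖Da a s ξ‖ ≤ c * ‖ξ‖ := by
  refine le_of_pow_le_pow_left₀ two_ne_zero (by positivity) ?_
  rw [norm_Da_sq, mul_pow, EuclideanSpace.real_norm_sq_eq, Finset.mul_sum]
  gcongr with i
  exact hsc i

lemma strictMonoOn_norm_Da (ha : ∀ i, 0 < a i) {ξ : Ed d} (hξ : ξ ≠ 0) :
    StrictMonoOn (fun s => ‖Da a s ξ‖) (Ioi 0) := by
  intro s hs t ht hst
  obtain ⟨i₀, hi₀⟩ : ∃ i, ξ i ≠ 0 := by
    by_contra! h
    exact hξ (PiLp.ext h)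
  have hrpow : ∀ i, s ^ a i < t ^ a i := fun i => Real.rpow_lt_rpow (le_of_lt hs) hst (ha i)
  refine lt_of_pow_lt_pow_left₀ 2 (norm_nonneg _) ?_
  rw [norm_Da_sq, norm_Da_sq]
  have hs0 : ∀ i, 0 ≤ s ^ a i := fun i => Real.rpow_nonneg (le_of_lt hs) _
  refine Finset.sum_lt_sum (fun i _ => ?_) ⟨i₀, Finset.mem_univ _, ?_⟩
  · exact mul_le_mul_of_nonneg_right (pow_le_pow_left₀ (hs0 i) (hrpow i).le 2) (sq_nonneg _)
  · exact mul_lt_mul_of_pos_right (pow_lt_pow_left₀ (hrpow i₀) (hs0 i₀) two_ne_zero)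
      (by positivity)

end Dilation

namespace IsAnisoNorm

variable {anorm : Ed d → ℝ}

lemma pos (hn : IsAnisoNorm a anorm) {ξ : Ed d} (hξ : ξ ≠ 0) : 0 < anorm ξ :=
  ((hn.2 ξ hξ _).2 rfl).1

lemma norm_Da_one_div (hn : IsAnisoNorm a anorm) {ξ : Ed d} (hξ : ξ ≠ 0) :
    ‖Da a (1 / anorm ξ) ξ‖ = 1 :=
  ((hn.2 ξ hξ _).2 rfl).2

lemma nonneg (hn : IsAnisoNorm a anorm) (ξ : Ed d) : 0 ≤ anorm ξ := by
  rcases eq_or_ne ξ 0 with rfl | hξ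
  · exact hn.1.ge
  · exact (hn.pos hξ).le

lemma lt_iff (ha : ∀ i, 0 < a i) (hn : IsAnisoNorm a anorm) (ξ : Ed d) {r : ℝ} (hr : 0 < r) :
    anorm ξ < r ↔ ‖Da a (1 / r) ξ‖ < 1 := by
  rcases eq_or_ne ξ 0 with rfl | hξ
  · simp [hn.1, hr, Da_zero]
  have hmono := (strictMonoOn_norm_Da ha hξ).lt_iff_lt (a := 1 / r) (b := 1 / anorm ξ)
    (by simpa) (by simpa using hn.pos hξ)
  rw [hn.norm_Da_one_div hξ] at hmono
  rw [hmono, one_div_lt_one_div hr (hn.pos hξ)]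

lemma neg (hn : IsAnisoNorm a anorm) (ξ : Ed d) : anorm (-ξ) = anorm ξ := by
  rcases eq_or_ne ξ 0 with rfl | hξ
  · rw [neg_zero]
  · exact (hn.2 (-ξ) (neg_ne_zero.2 hξ) _).1 ⟨hn.pos hξ, by rw [Da_neg, norm_neg,
      hn.norm_Da_one_div hξ]⟩

lemma sub_comm (hn : IsAnisoNorm a anorm) (x y : Ed d) : anorm (x - y) = anorm (y - x) := by
  rw [← hn.neg, neg_sub]

lemma add_le_of_rpow_le (ha : ∀ i, 0 < a i) (hn : IsAnisoNorm a anorm) {K : ℝ} (hK : 0 < K)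
    (hKa : ∀ i, (1 / K) ^ a i ≤ 1 / 2) (x y : Ed d) :
    anorm (x + y) ≤ K * (anorm x + anorm y) := by
  suffices h : ∀ r, anorm x + anorm y < r → anorm (x + y) < K * r by
    rw [← div_le_iff₀' hK]
    refine le_of_forall_gt_imp_ge_of_dense fun r hr => ?_
    rw [div_le_iff₀' hK]
    exact (h r hr).le
  intro r hr
  have hr0 : 0 < r := by linarith [hn.nonneg x, hn.nonneg y]
  have hx := (hn.lt_iff ha x hr0).1 (by linarith [hn.nonneg y])
  have hy := (hn.lt_iff ha y hr0).1 (by linarith [hn.nonneg x])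
  rw [hn.lt_iff ha _ (mul_pos hK hr0)]
  calc ‖Da a (1 / (K * r)) (x + y)‖
      = ‖Da a (1 / K) (Da a (1 / r) x + Da a (1 / r) y)‖ := by
        rw [← Da_add, Da_Da (by positivity) (by positivity), one_div_mul_one_div]
    _ ≤ 1 / 2 * ‖Da a (1 / r) x + Da a (1 / r) y‖ :=
        norm_Da_le (by positivity) (by norm_num) hKa _
    _ ≤ 1 / 2 * (‖Da a (1 / r) x‖ + ‖Da a (1 / r) y‖) := by gcongr; exact norm_add_le _ _
    _ < 1 := by linarith

lemma exists_add_le (ha : ∀ i, 0 < a i) (hn : IsAnisoNorm a anorm) :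
    ∃ K, 0 < K ∧ ∀ x y, anorm (x + y) ≤ K * (anorm x + anorm y) := by
  obtain ⟨m, hm, ham⟩ : ∃ m, 0 < m ∧ ∀ i, m ≤ a i := by
    cases isEmpty_or_nonempty (Fin d)
    · exact ⟨1, one_pos, isEmptyElim⟩
    · obtain ⟨i₀, hi₀⟩ := Finite.exists_min a
      exact ⟨a i₀, ha i₀, hi₀⟩
  refine ⟨2 ^ (1 / m), by positivity, hn.add_le_of_rpow_le ha (by positivity) fun i => ?_⟩
  have hexp : -(1 / m) * a i ≤ -1 := by
    rw [neg_mul, neg_le_neg_iff, one_div_mul_eq_div, one_le_div hm]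
    exact ham i
  calc (1 / 2 ^ (1 / m)) ^ a i = (2 : ℝ) ^ (-(1 / m) * a i) := by
        rw [Real.rpow_mul zero_le_two, Real.rpow_neg zero_le_two, one_div (2 ^ (1 / m))]
    _ ≤ 2 ^ (-1 : ℝ) := Real.rpow_le_rpow_of_exponent_le one_le_two hexp
    _ = 1 / 2 := by norm_num

end IsAnisoNorm

section AnisoBall

variable {anorm : Ed d → ℝ}

def anisoBall (anorm : Ed d → ℝ) (ξ : Ed d) (r : ℝ) : Set (Ed d) := {ζ | anorm (ζ - ξ) < r}

lemma anisoBall_subset_anisoBall {ξ : Ed d} {r r' : ℝ} (h : r ≤ r') :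
    anisoBall anorm ξ r ⊆ anisoBall anorm ξ r' :=
  fun _ hζ => lt_of_lt_of_le hζ h

lemma anisoBall_eq_preimage (ha : ∀ i, 0 < a i) (hn : IsAnisoNorm a anorm) (ξ : Ed d) {r : ℝ}
    (hr : 0 < r) :
    anisoBall anorm ξ r = (fun ζ => ζ - ξ) ⁻¹' (daLinear a (1 / r) ⁻¹' Metric.ball 0 1) := by
  ext ζ
  simp [anisoBall, hn.lt_iff ha _ hr]

lemma isOpen_anisoBall (ha : ∀ i, 0 < a i) (hn : IsAnisoNorm a anorm) (ξ : Ed d) {r : ℝ}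
    (hr : 0 < r) : IsOpen (anisoBall anorm ξ r) := by
  rw [anisoBall_eq_preimage ha hn ξ hr]
  exact (Metric.isOpen_ball.preimage (daLinear a (1 / r)).continuous_of_finiteDimensional).preimage
    (continuous_sub_right ξ)

lemma volume_anisoBall (ha : ∀ i, 0 < a i) (hn : IsAnisoNorm a anorm) (ξ : Ed d) {r : ℝ}
    (hr : 0 < r) :
    volume (anisoBall anorm ξ r) =
      ENNReal.ofReal (r ^ ∑ i, a i) * volume (Metric.ball (0 : Ed d) 1) := by
  have hdet := det_daLinear (a := a) (one_div_pos.2 hr)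
  simp_rw [anisoBall_eq_preimage ha hn ξ hr, sub_eq_add_neg]
  rw [measure_preimage_add_right,
    Measure.addHaar_preimage_linearMap _ (by rw [hdet]; positivity), hdet, one_div, Real.inv_rpow hr.le, inv_inv, abs_of_pos (by positivity)]

lemma volume_anisoBall_mul_le (ha : ∀ i, 0 < a i) (hn : IsAnisoNorm a anorm) (ξ ζ : Ed d)
    {c r : ℝ} (hc : 0 < c) (hr : 0 < r) :
    volume (anisoBall anorm ξ (c * r)) ≤ ⌈c ^ ∑ i, a i⌉₊ * volume (anisoBall anorm ζ r) := by
  rw [volume_anisoBall ha hn _ (mul_pos hc hr), volume_anisoBall ha hn _ hr,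
    Real.mul_rpow hc.le hr.le, ENNReal.ofReal_mul (by positivity), mul_assoc]
  gcongr
  exact (ENNReal.ofReal_le_ofReal (Nat.le_ceil _)).trans_eq (ENNReal.ofReal_natCast _)

lemma anisoBall_subset_of_inter_nonempty (hn : IsAnisoNorm a anorm) {K : ℝ} (hK0 : 0 < K)
    (hK : ∀ x y, anorm (x + y) ≤ K * (anorm x + anorm y)) {ξ₁ ξ₂ : Ed d} {r₁ r₂ : ℝ}
    (hne : (anisoBall anorm ξ₁ r₁ ∩ anisoBall anorm ξ₂ r₂).Nonempty) (ρ : ℝ) :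
    anisoBall anorm ξ₂ ρ ⊆ anisoBall anorm ξ₁ (K * (ρ + K * (r₁ + r₂))) := by
  obtain ⟨ζ, hζ₁, hζ₂⟩ := hne
  have hcenter : anorm (ξ₂ - ξ₁) ≤ K * (r₁ + r₂) :=
    calc anorm (ξ₂ - ξ₁) = anorm ((ζ - ξ₁) + (ξ₂ - ζ)) := by congr 1; abel
      _ ≤ K * (anorm (ζ - ξ₁) + anorm (ξ₂ - ζ)) := hK _ _
      _ ≤ K * (r₁ + r₂) := by
        rw [hn.sub_comm ξ₂]
        exact mul_le_mul_of_nonneg_left (add_le_add hζ₁.le hζ₂.le) hK0.le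
  intro η hη
  calc anorm (η - ξ₁) = anorm ((η - ξ₂) + (ξ₂ - ξ₁)) := by congr 1; abel
    _ ≤ K * (anorm (η - ξ₂) + anorm (ξ₂ - ξ₁)) := hK _ _
    _ < K * (ρ + K * (r₁ + r₂)) := mul_lt_mul_of_pos_left (add_lt_add_of_lt_of_le hη hcenter) hK0

end AnisoBall

namespace IsModerate

variable {anorm h : Ed d → ℝ} {δ₀ R : ℝ}

lemma le_mul_and_le_mul (hmod : IsModerate anorm h δ₀ R) (hpos : ∀ ξ, ξ ≠ 0 → 0 < h ξ) (hR : 0 < R)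
    {ξ ζ : Ed d} (hξ : ξ ≠ 0) (hζ : ζ ≠ 0) (hd : anorm (ξ - ζ) ≤ δ₀ * h ξ) :
    h ζ ≤ R * h ξ ∧ h ξ ≤ R * h ζ := by
  obtain ⟨hlow, hup⟩ := hmod ξ ζ hξ hζ hd
  rw [le_div_iff₀ (hpos ζ hζ)] at hlow
  rw [div_le_iff₀ (hpos ζ hζ)] at hup
  exact ⟨(inv_mul_le_iff₀ hR).1 hlow, hup⟩

lemma le_sq_mul_of_inter_nonempty (ha : ∀ i, 0 < a i) (hn : IsAnisoNorm a anorm)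
    (hmod : IsModerate anorm h δ₀ R) (hpos : ∀ ξ, ξ ≠ 0 → 0 < h ξ) (hR : 0 < R) {δ : ℝ}
    (hδ : δ ≤ δ₀) {ξ₁ ξ₂ : Ed d} (hξ₁ : ξ₁ ≠ 0) (hξ₂ : ξ₂ ≠ 0)
    (hne : (anisoBall anorm ξ₁ (δ * h ξ₁) ∩ anisoBall anorm ξ₂ (δ * h ξ₂)).Nonempty) :
    h ξ₂ ≤ R ^ 2 * h ξ₁ := by
  have : Nontrivial (Ed d) := nontrivial_of_ne _ _ hξ₁
  obtain ⟨ζ₀, hζ₀₁, hζ₀₂⟩ := hne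
  have hopen : IsOpen (anisoBall anorm ξ₁ (δ * h ξ₁) ∩ anisoBall anorm ξ₂ (δ * h ξ₂)) :=
    (isOpen_anisoBall ha hn _ ((hn.nonneg _).trans_lt hζ₀₁)).inter
      (isOpen_anisoBall ha hn _ ((hn.nonneg _).trans_lt hζ₀₂))
  -- `h` is only controlled at nonzero points, so move the common point off the origin.
  obtain ⟨ζ, ⟨hζ₁, hζ₂⟩, hζ0⟩ :=
    ((infinite_of_mem_nhds ζ₀ (hopen.mem_nhds ⟨hζ₀₁, hζ₀₂⟩)).sdiff (finite_singleton 0)).nonempty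
  have hcomp : ∀ ξ, ξ ≠ 0 → ζ ∈ anisoBall anorm ξ (δ * h ξ) → h ζ ≤ R * h ξ ∧ h ξ ≤ R * h ζ :=
    fun ξ hξ hζξ => hmod.le_mul_and_le_mul hpos hR hξ hζ0 <| by
      rw [hn.sub_comm]
      exact hζξ.le.trans (mul_le_mul_of_nonneg_right hδ (hpos ξ hξ).le)
  calc h ξ₂ ≤ R * h ζ := (hcomp ξ₂ hξ₂ hζ₂).2
    _ ≤ R * (R * h ξ₁) := mul_le_mul_of_nonneg_left (hcomp ξ₁ hξ₁ hζ₁).1 hR.le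
    _ = R ^ 2 * h ξ₁ := by ring

lemma anisoBall_div_sq_subset_of_inter_nonempty (ha : ∀ i, 0 < a i) (hn : IsAnisoNorm a anorm)
    (hmod : IsModerate anorm h δ₀ R) (hpos : ∀ ξ, ξ ≠ 0 → 0 < h ξ) (hR : 0 < R) {δ₁ δ' : ℝ}
    (hδ₁ : 0 < δ₁) (hδ₁δ₀ : δ₁ ≤ δ₀) (hδ' : 0 < δ') {K : ℝ} (hK0 : 0 < K)
    (hK : ∀ x y, anorm (x + y) ≤ K * (anorm x + anorm y)) {ξ₁ ξ₂ : Ed d} (hξ₁ : ξ₁ ≠ 0)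
    (hξ₂ : ξ₂ ≠ 0)
    (hne : (anisoBall anorm ξ₁ (δ₁ * h ξ₁) ∩ anisoBall anorm ξ₂ (δ₁ * h ξ₂)).Nonempty) :
    anisoBall anorm ξ₂ (δ' * h ξ₁ / R ^ 2) ⊆ anisoBall anorm ξ₂ (δ' * h ξ₂) ∧
      anisoBall anorm ξ₂ (δ' * h ξ₁ / R ^ 2) ⊆
        anisoBall anorm ξ₁ (K * (δ' * R ^ 2 + K * δ₁ * (1 + R ^ 2)) * h ξ₁) := by
  have h₂₁ := hmod.le_sq_mul_of_inter_nonempty ha hn hpos hR hδ₁δ₀ hξ₁ hξ₂ hne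
  have h₁₂ := hmod.le_sq_mul_of_inter_nonempty ha hn hpos hR hδ₁δ₀ hξ₂ hξ₁ (by rwa [inter_comm])
  have hρ : δ' * h ξ₁ / R ^ 2 ≤ δ' * h ξ₂ := by
    rw [div_le_iff₀ (by positivity)]
    nlinarith
  refine ⟨anisoBall_subset_anisoBall hρ,
    (anisoBall_subset_of_inter_nonempty hn hK0 hK hne _).trans
      (anisoBall_subset_anisoBall ?_)⟩
  calc K * (δ' * h ξ₁ / R ^ 2 + K * (δ₁ * h ξ₁ + δ₁ * h ξ₂))
      ≤ K * (δ' * (R ^ 2 * h ξ₁) + K * (δ₁ * h ξ₁ + δ₁ * (R ^ 2 * h ξ₁))) := by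
        gcongr
        exact hρ.trans (by gcongr)
    _ = K * (δ' * R ^ 2 + K * δ₁ * (1 + R ^ 2)) * h ξ₁ := by ring

end IsModerate

lemma finite_and_ncard_le_of_pairwiseDisjoint {α ι : Type*} [MeasurableSpace α] {μ : Measure α}
    {T : Set ι} {s : ι → Set α} {U : Set α} {m : ℝ≥0∞} {N : ℕ} (hm0 : m ≠ 0) (hm : m ≠ ∞)
    (hs : ∀ j ∈ T, MeasurableSet (s j)) (hd : T.PairwiseDisjoint s) (hsU : ∀ j ∈ T, s j ⊆ U)
    (hms : ∀ j ∈ T, m ≤ μ (s j)) (hU : μ U ≤ N * m) :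
    T.Finite ∧ T.ncard ≤ N := by
  have hcard : ∀ t : Finset ι, ↑t ⊆ T → t.card ≤ N := by
    intro t ht
    have hle : (t.card : ℝ≥0∞) * m ≤ N * m :=
      calc (t.card : ℝ≥0∞) * m = ∑ _j ∈ t, m := by rw [Finset.sum_const, nsmul_eq_mul]
        _ ≤ ∑ j ∈ t, μ (s j) := Finset.sum_le_sum fun j hj => hms j (ht hj)
        _ = μ (⋃ j ∈ t, s j) :=
          (measure_biUnion_finset (hd.subset ht) fun j hj => hs j (ht hj)).symm
        _ ≤ μ U := measure_mono (iUnion₂_subset fun j hj => hsU j (ht hj))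
        _ ≤ N * m := hU
    exact_mod_cast (ENNReal.mul_le_mul_iff_left hm0 hm).1 hle
  have hfin : T.Finite := by
    by_contra hinf
    obtain ⟨t, htT, htcard⟩ := Set.Infinite.exists_subset_card_eq hinf (N + 1)
    have := hcard t htT
    omega
  exact ⟨hfin, (Set.ncard_eq_toFinset_card T hfin).trans_le (hcard _ (by simp))⟩

lemma exists_forall_ncard_inter_nonempty_le {anorm h : Ed d → ℝ} {δ₀ R δ₁ δ' : ℝ}
    (ha : ∀ i, 0 < a i) (hn : IsAnisoNorm a anorm) (hpos : ∀ ξ, ξ ≠ 0 → 0 < h ξ) (hR : 0 < R)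
    (hmod : IsModerate anorm h δ₀ R) (hδ₁ : 0 < δ₁) (hδ₁δ₀ : δ₁ ≤ δ₀) (hδ' : 0 < δ')
    {I J : Type*} {ξA : I → Ed d} {ξB : J → Ed d} (hA0 : ∀ i, ξA i ≠ 0) (hB0 : ∀ j, ξB j ≠ 0)
    (hBdisj : Pairwise fun j j' =>
      Disjoint (anisoBall anorm (ξB j) (δ' * h (ξB j)))
        (anisoBall anorm (ξB j') (δ' * h (ξB j')))) :
    ∃ N : ℕ, ∀ i,
      {j | (anisoBall anorm (ξA i) (δ₁ * h (ξA i)) ∩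
        anisoBall anorm (ξB j) (δ₁ * h (ξB j))).Nonempty}.Finite ∧
      {j | (anisoBall anorm (ξA i) (δ₁ * h (ξA i)) ∩
        anisoBall anorm (ξB j) (δ₁ * h (ξB j))).Nonempty}.ncard ≤ N := by
  obtain ⟨K, hK0, hK⟩ := hn.exists_add_le ha
  set C := K * (δ' * R ^ 2 + K * δ₁ * (1 + R ^ 2))
  refine ⟨⌈(C * R ^ 2 / δ') ^ ∑ i, a i⌉₊, fun i => ?_⟩
  have hAi := hpos _ (hA0 i)
  set ρ := δ' * h (ξA i) / R ^ 2 with hρdef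
  have hρ : 0 < ρ := by positivity
  have hsmall : ∀ j, (anisoBall anorm (ξA i) (δ₁ * h (ξA i)) ∩
      anisoBall anorm (ξB j) (δ₁ * h (ξB j))).Nonempty →
      anisoBall anorm (ξB j) ρ ⊆ anisoBall anorm (ξB j) (δ' * h (ξB j)) ∧
      anisoBall anorm (ξB j) ρ ⊆ anisoBall anorm (ξA i) (C * h (ξA i)) := fun j =>
    hmod.anisoBall_div_sq_subset_of_inter_nonempty ha hn hpos hR hδ₁ hδ₁δ₀ hδ' hK0 hK
      (hA0 i) (hB0 j)
  have hvol : ∀ ξ, volume (anisoBall anorm ξ ρ) =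
      ENNReal.ofReal (ρ ^ ∑ i, a i) * volume (Metric.ball (0 : Ed d) 1) :=
    fun ξ => volume_anisoBall ha hn ξ hρ
  have hcenter : ξA i ∈ anisoBall anorm (ξA i) ρ := by simpa [anisoBall, hn.1] using hρ
  refine finite_and_ncard_le_of_pairwiseDisjoint (μ := volume)
    (s := fun j => anisoBall anorm (ξB j) ρ) (m := volume (anisoBall anorm (ξA i) ρ))
    ((isOpen_anisoBall ha hn _ hρ).measure_ne_zero _ ⟨_, hcenter⟩)
    (by rw [hvol]; exact ENNReal.mul_ne_top ENNReal.ofReal_ne_top measure_ball_lt_top.ne)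
    (fun j _ => (isOpen_anisoBall ha hn _ hρ).measurableSet)
    (fun j hj j' hj' hne => (hBdisj hne).mono (hsmall j hj).1 (hsmall j' hj').1)
    (fun j hj => (hsmall j hj).2) (fun j _ => (hvol _).trans_le (hvol _).ge) ?_
  have hCρ : C * h (ξA i) = C * R ^ 2 / δ' * ρ := by rw [hρdef]; field_simp
  rw [hCρ]
  exact volume_anisoBall_mul_le ha hn _ _ (by positivity) hρ

end

theorem stmt7_general {d : ℕ} (a : Fin d → ℝ) (ha : ∀ i, 0 < a i)
    (anorm : Ed d → ℝ) (hnorm : IsAnisoNorm a anorm)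
    (ht : Ed d → ℝ) (htpos : ∀ ξ : Ed d, ξ ≠ 0 → 0 < ht ξ)
    (δ₀ R : ℝ) (hR : 0 < R) (hmod : IsModerate anorm ht δ₀ R)
    (δ₁ : ℝ) (hδ₁ : 0 < δ₁) (hδ₁δ₀ : δ₁ < δ₀)
    (I J : Type) (ξA : I → Ed d) (ξB : J → Ed d)
    (hA0 : ∀ i, ξA i ≠ 0) (hB0 : ∀ j, ξB j ≠ 0)
    (hAdisj : ∃ δ' : ℝ, 0 < δ' ∧ δ' < δ₁ ∧ ∀ i i', i ≠ i' →
      ∀ ζ : Ed d, ¬(anorm (ζ - ξA i) < δ' * ht (ξA i) ∧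
        anorm (ζ - ξA i') < δ' * ht (ξA i')))
    (hBdisj : ∃ δ' : ℝ, 0 < δ' ∧ δ' < δ₁ ∧ ∀ j j', j ≠ j' →
      ∀ ζ : Ed d, ¬(anorm (ζ - ξB j) < δ' * ht (ξB j) ∧
        anorm (ζ - ξB j') < δ' * ht (ξB j'))) :
    (∃ N : ℕ, ∀ i,
      {j | ∃ ζ : Ed d, anorm (ζ - ξA i) < δ₁ * ht (ξA i) ∧
        anorm (ζ - ξB j) < δ₁ * ht (ξB j)}.Finite ∧
      {j | ∃ ζ : Ed d, anorm (ζ - ξA i) < δ₁ * ht (ξA i) ∧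
        anorm (ζ - ξB j) < δ₁ * ht (ξB j)}.ncard ≤ N) ∧
    (∃ N : ℕ, ∀ j,
      {i | ∃ ζ : Ed d, anorm (ζ - ξB j) < δ₁ * ht (ξB j) ∧
        anorm (ζ - ξA i) < δ₁ * ht (ξA i)}.Finite ∧
      {i | ∃ ζ : Ed d, anorm (ζ - ξB j) < δ₁ * ht (ξB j) ∧
        anorm (ζ - ξA i) < δ₁ * ht (ξA i)}.ncard ≤ N) := by
  obtain ⟨δA, hδA, -, hAdisj⟩ := hAdisj
  obtain ⟨δB, hδB, -, hBdisj⟩ := hBdisj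
  exact ⟨exists_forall_ncard_inter_nonempty_le ha hnorm htpos hR hmod hδ₁ hδ₁δ₀.le hδB hA0 hB0
      fun j j' hne => disjoint_left.2 fun ζ h₁ h₂ => hBdisj j j' hne ζ ⟨h₁, h₂⟩,
    exists_forall_ncard_inter_nonempty_le ha hnorm htpos hR hmod hδ₁ hδ₁δ₀.le hδA hB0 hA0
      fun i i' hne => disjoint_left.2 fun ζ h₁ h₂ => hAdisj i i' hne ζ ⟨h₁, h₂⟩⟩

/-- Any two admissible coverings `{A_i}`, `{B_j}` of `ℝ^d \ {0}` by d-balls with the same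
d-moderate radius function `h̃` (with pairwise disjointness at a smaller radius `δ'`)
satisfy `sup_i #J(i) < ∞` and `sup_j #I(j) < ∞`. -/
theorem stmt7 {d : ℕ} (a : Fin d → ℝ) (ha : ∀ i, 0 < a i) (hsum : ∑ i, a i = d)
    (anorm : Ed d → ℝ) (hnorm : IsAnisoNorm a anorm)
    (ht : Ed d → ℝ) (htpos : ∀ ξ : Ed d, ξ ≠ 0 → 0 < ht ξ)
    (δ₀ R : ℝ) (hδ₀ : 0 < δ₀) (hR : 0 < R) (hmod : IsModerate anorm ht δ₀ R)
    (c : ℝ) (hc : 0 < c) (hbd : ∀ ξ : Ed d, ξ ≠ 0 → ht ξ ≤ c * anorm ξ)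
    (δ₁ : ℝ) (hδ₁ : 0 < δ₁) (hδ₁δ₀ : δ₁ < δ₀)
    (I J : Type) (ξA : I → Ed d) (ξB : J → Ed d)
    (hA0 : ∀ i, ξA i ≠ 0) (hB0 : ∀ j, ξB j ≠ 0)
    (hAcov : ∀ ζ : Ed d, ζ ≠ 0 → ∃ i, anorm (ζ - ξA i) < δ₁ * ht (ξA i))
    (hBcov : ∀ ζ : Ed d, ζ ≠ 0 → ∃ j, anorm (ζ - ξB j) < δ₁ * ht (ξB j))
    (hAdisj : ∃ δ' : ℝ, 0 < δ' ∧ δ' < δ₁ ∧ ∀ i i', i ≠ i' →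
      ∀ ζ : Ed d, ¬(anorm (ζ - ξA i) < δ' * ht (ξA i) ∧
        anorm (ζ - ξA i') < δ' * ht (ξA i')))
    (hBdisj : ∃ δ' : ℝ, 0 < δ' ∧ δ' < δ₁ ∧ ∀ j j', j ≠ j' →
      ∀ ζ : Ed d, ¬(anorm (ζ - ξB j) < δ' * ht (ξB j) ∧
        anorm (ζ - ξB j') < δ' * ht (ξB j'))) :
    (∃ N : ℕ, ∀ i,
      {j | ∃ ζ : Ed d, anorm (ζ - ξA i) < δ₁ * ht (ξA i) ∧
        anorm (ζ - ξB j) < δ₁ * ht (ξB j)}.Finite ∧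
      {j | ∃ ζ : Ed d, anorm (ζ - ξA i) < δ₁ * ht (ξA i) ∧
        anorm (ζ - ξB j) < δ₁ * ht (ξB j)}.ncard ≤ N) ∧
    (∃ N : ℕ, ∀ j,
      {i | ∃ ζ : Ed d, anorm (ζ - ξB j) < δ₁ * ht (ξB j) ∧
        anorm (ζ - ξA i) < δ₁ * ht (ξA i)}.Finite ∧
      {i | ∃ ζ : Ed d, anorm (ζ - ξB j) < δ₁ * ht (ξB j) ∧
        anorm (ζ - ξA i) < δ₁ * ht (ξA i)}.ncard ≤ N) :=
  stmt7_general a ha anorm hnorm ht htpos δ₀ R hR hmod δ₁ hδ₁ hδ₁δ₀ I J ξA ξB hA0 hB0 hAdisj hBdisj
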